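/- arXiv:2402.17665 — 3 statements merged into one kernel-verified Lean document; each statement's English description precedes it below -/
import Mathlib

section
/- If S is a polyhedral subdivision of a polytope P, then the dual graph G^∨(S) is connected. -/
open Set

/-- A polytope in ℝ^d: the convex hull of finitely many points. -/
def IsPolytope {d : ℕ} (P : Set (Fin d → ℝ)) : Prop :=
  ∃ V : Finset (Fin d → ℝ), P = convexHull ℝ (V : Set (Fin d → ℝ))

/-- A polyhedral subdivision of a set P ⊆ ℝ^d: a finite collection of nonempty
polytopes (the cells) covering P which meet face-to-face, i.e. the intersection
of any two cells is an (exposed) face of each of them. -/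
structure Subdivision (d : ℕ) (P : Set (Fin d → ℝ)) where
  cells : Finset (Set (Fin d → ℝ))
  poly : ∀ C ∈ cells, IsPolytope C
  cell_nonempty : ∀ C ∈ cells, C.Nonempty
  covers : ⋃₀ (cells : Set (Set (Fin d → ℝ))) = P
  faceToFace : ∀ C ∈ cells, ∀ C' ∈ cells, IsExposed ℝ C (C ∩ C')

/-- A maximal cell of a subdivision. -/
def Subdivision.IsMaxCell {d : ℕ} {P : Set (Fin d → ℝ)} (S : Subdivision d P)
    (C : Set (Fin d → ℝ)) : Prop :=
  C ∈ S.cells ∧ ∀ C' ∈ S.cells, C ⊆ C' → C = C'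

/-- F is a facet (codimension-one face) of the polytope P. -/
def IsFacet {d : ℕ} (P F : Set (Fin d → ℝ)) : Prop :=
  IsExposed ℝ P F ∧
    Module.finrank ℝ (vectorSpan ℝ F) + 1 = Module.finrank ℝ (vectorSpan ℝ P)

/-- Adjacency in the dual graph of a subdivision: two distinct maximal cells
sharing a codimension-one face. -/
def dualAdj {d : ℕ} {P : Set (Fin d → ℝ)} (S : Subdivision d P)
    (C C' : Set (Fin d → ℝ)) : Prop :=
  C ≠ C' ∧ IsFacet C (C ∩ C') ∧ IsFacet C' (C ∩ C')

/-- The dual graph of a subdivision, as a simple graph on the maximal cells. -/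
def dualGraph {d : ℕ} {P : Set (Fin d → ℝ)} (S : Subdivision d P) :
    SimpleGraph {C : Set (Fin d → ℝ) // S.IsMaxCell C} where
  Adj F G := dualAdj S F.1 G.1
  symm := by
    refine ⟨?_⟩
    rintro F G ⟨h1, h2, h3⟩
    exact ⟨fun h => h1 h.symm, by rwa [Set.inter_comm], by rwa [Set.inter_comm]⟩
  loopless := ⟨fun F h => h.1 rfl⟩

/-!
Maximal cells are full-dimensional (a relative-interior point of a maximal cell lies in no
other cell), and two distinct ones meet in a proper face, of smaller dimension. Hence for
maximal cells `C`, `C'` one finds `p ∈ C`, `q ∈ C'` such that the segment `[p, q]` meets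
the intersection of two distinct maximal cells only where it has codimension one, i.e. where
the two cells are adjacent. The cells reachable from `C` and the remaining maximal cells then
cover the connected segment by two closed sets that cannot meet on it, so the second one misses
the segment and the cell `C'` containing `q` is reachable from `C`.
-/

open Module Filter Topology

namespace AffineSubspace

variable {V : Type*} [AddCommGroup V] [Module ℝ V]

theorem lineMap_mem_of_lineMap_mem (A : AffineSubspace ℝ V) {p q : V} {t s : ℝ} (hts : t ≠ s)
    (ht : AffineMap.lineMap p q t ∈ A) (hs : AffineMap.lineMap p q s ∈ A) (r : ℝ) :
    AffineMap.lineMap p q r ∈ A := by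
  convert A.smul_vsub_vadd_mem ((r - t) / (s - t)) hs ht ht using 1
  have hst : s - t ≠ 0 := sub_ne_zero.2 hts.symm
  simp only [AffineMap.lineMap_apply_module, vsub_eq_sub, vadd_eq_add]
  match_scalars <;> field_simp <;> ring

end AffineSubspace

section Convex

variable {V : Type*} [NormedAddCommGroup V] [NormedSpace ℝ V]

theorem Convex.exists_mem_forall_notMem_of_finite {W : Set V} (hW : Convex ℝ W)
    (hne : W.Nonempty) {𝓐 : Set (AffineSubspace ℝ V)} (h𝓐 : 𝓐.Finite)
    (hW𝓐 : ∀ A ∈ 𝓐, ¬ W ⊆ A) : ∃ p ∈ W, ∀ A ∈ 𝓐, p ∉ A := by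
  induction 𝓐, h𝓐 using Set.Finite.induction_on with
  | empty =>
    obtain ⟨p, hp⟩ := hne
    exact ⟨p, hp, by simp⟩
  | @insert A 𝓐 _ h𝓐 ih =>
    obtain ⟨p, hpW, hp⟩ := ih fun B hB => hW𝓐 B (mem_insert_of_mem A hB)
    by_cases hpA : p ∉ A
    · exact ⟨p, hpW, forall_mem_insert.2 ⟨hpA, hp⟩⟩
    obtain ⟨q, hqW, hqA⟩ := not_subset.1 (hW𝓐 A (mem_insert A 𝓐))
    -- Each subspace meets the line through `p` and `q` in at most one point.
    have hbad : ∀ B ∈ insert A 𝓐, {t : ℝ | AffineMap.lineMap p q t ∈ B}.Subsingleton := by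
      intro B hB t ht s hs
      by_contra hts
      have key := B.lineMap_mem_of_lineMap_mem hts ht hs
      rcases hB with rfl | hB
      · exact hqA (by simpa using key 1)
      · exact hp B hB (by simpa using key 0)
    have hfin : (⋃ B ∈ insert A 𝓐, {t : ℝ | AffineMap.lineMap p q t ∈ B}).Finite :=
      (h𝓐.insert A).biUnion fun B hB => (hbad B hB).finite
    obtain ⟨t, ht, htbad⟩ := ((Ioo_infinite (zero_lt_one' ℝ)).sdiff hfin).nonempty
    exact ⟨_, hW.lineMap_mem hpW hqW (Ioo_subset_Icc_self ht),
      fun B hB htB => htbad (mem_biUnion hB htB)⟩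

theorem exists_pos_add_smul_sub_mem_of_mem_intrinsicInterior {C : Set V} {x y : V}
    (hx : x ∈ intrinsicInterior ℝ C) (hy : y ∈ C) : ∃ t : ℝ, 0 < t ∧ x + t • (x - y) ∈ C := by
  obtain ⟨x', hx', rfl⟩ := hx
  have hmem : ∀ t : ℝ, (x' : V) + t • ((x' : V) - y) ∈ affineSpan ℝ C := fun t => by
    simpa [vsub_eq_sub, vadd_eq_add, add_comm] using
      (affineSpan ℝ C).smul_vsub_vadd_mem t x'.2 (subset_affineSpan ℝ C hy) x'.2
  let g : ℝ → affineSpan ℝ C := fun t => ⟨_, hmem t⟩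
  have hg : Tendsto g (𝓝[>] 0) (𝓝 x') := by
    refine ((Continuous.subtype_mk (by fun_prop) hmem).tendsto' 0 x' ?_).mono_left
      nhdsWithin_le_nhds
    ext; simp
  obtain ⟨t, htC, ht⟩ :=
    ((hg.eventually (isOpen_interior.mem_nhds hx')).and self_mem_nhdsWithin).exists
  exact ⟨t, ht, interior_subset (s := ((↑) ⁻¹' C : Set (affineSpan ℝ C))) htC⟩

theorem IsExtreme.eq_of_mem_intrinsicInterior {C F : Set V} (hF : IsExtreme ℝ C F) {x : V}
    (hx : x ∈ intrinsicInterior ℝ C) (hxF : x ∈ F) : F = C := by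
  refine hF.subset.antisymm fun y hy => ?_
  obtain ⟨t, ht, hz⟩ := exists_pos_add_smul_sub_mem_of_mem_intrinsicInterior hx hy
  refine hF.left_mem_of_mem_openSegment hy hz hxF
    ⟨t / (1 + t), 1 / (1 + t), by positivity, by positivity, by field_simp; ring, ?_⟩
  match_scalars
  · field_simp; ring
  · field_simp

theorem IsExposed.finrank_vectorSpan_lt [FiniteDimensional ℝ V] {C F : Set V}
    (hF : IsExposed ℝ C F) (hne : F.Nonempty) (hFC : F ≠ C) :
    finrank ℝ (vectorSpan ℝ F) < finrank ℝ (vectorSpan ℝ C) := by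
  obtain ⟨l, rfl⟩ := hF hne
  obtain ⟨x, hxC, hx⟩ := hne
  obtain ⟨y, hyC, hyF⟩ := not_subset.1 fun h => hFC (hF.subset.antisymm h)
  have hker : vectorSpan ℝ {z ∈ C | ∀ w ∈ C, l w ≤ l z} ≤ LinearMap.ker (l : V →ₗ[ℝ] ℝ) := by
    rw [vectorSpan_def, Submodule.span_le]
    rintro _ ⟨a, ⟨haC, ha⟩, b, ⟨hbC, hb⟩, rfl⟩
    simp [le_antisymm (hb a haC) (ha b hbC)]
  have hyx : l (y - x) ≠ 0 := by
    simp only [mem_sep_iff, hyC, true_and, not_forall, not_le] at hyF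
    obtain ⟨z, hzC, hz⟩ := hyF
    rw [map_sub]
    linarith [hx z hzC]
  refine Submodule.finrank_lt_finrank_of_lt (lt_of_le_of_ne (vectorSpan_mono ℝ hF.subset)
    fun h => hyx ?_)
  exact hker (h ▸ vsub_mem_vectorSpan ℝ hyC hxC)

theorem Convex.subset_affineSpan_of_inter_subset {P C U : Set V} (hP : Convex ℝ P) {x : V}
    (hx : x ∈ P) (hU : U ∈ 𝓝 x) (hPU : P ∩ U ⊆ C) : P ⊆ affineSpan ℝ C := by
  intro y hy
  have hline : Tendsto (AffineMap.lineMap x y) (𝓝[>] (0 : ℝ)) (𝓝 x) :=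
    ((AffineMap.lineMap_continuous.tendsto' 0 x (by simp))).mono_left nhdsWithin_le_nhds
  obtain ⟨t, htU, ht⟩ := ((hline.eventually hU).and (Ioo_mem_nhdsGT zero_lt_one)).exists
  have hxC : AffineMap.lineMap x y (0 : ℝ) ∈ affineSpan ℝ C := by
    simpa using subset_affineSpan ℝ C (hPU ⟨hx, mem_of_mem_nhds hU⟩)
  have htC : AffineMap.lineMap x y t ∈ affineSpan ℝ C :=
    subset_affineSpan ℝ C (hPU ⟨hP.lineMap_mem hx hy (Ioo_subset_Icc_self ht), htU⟩)
  simpa using (affineSpan ℝ C).lineMap_mem_of_lineMap_mem ht.1.ne hxC htC 1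

end Convex

section GenericSegment

variable {V : Type*} [NormedAddCommGroup V] [NormedSpace ℝ V] [FiniteDimensional ℝ V]

theorem not_subset_of_finrank_direction_lt {W : Set V} {A : AffineSubspace ℝ V}
    (h : finrank ℝ A.direction < finrank ℝ (vectorSpan ℝ W)) : ¬ W ⊆ A := fun hWA =>
  (Submodule.finrank_mono (vectorSpan_mono ℝ hWA)).not_gt h

/-- Choose `p` off the affine spans of all `E i`, then `q` off the spans of `p` with each
`E i` of codimension at least two; a point of `E i` on `[p, q]` then forces `q` into the latter. -/
theorem exists_segment_finrank_add_one_eq {W₁ W₂ : Set V} (hW₁ : Convex ℝ W₁)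
    (hW₂ : Convex ℝ W₂) (hne₁ : W₁.Nonempty) (hne₂ : W₂.Nonempty) {n : ℕ}
    (hn₁ : finrank ℝ (vectorSpan ℝ W₁) = n) (hn₂ : finrank ℝ (vectorSpan ℝ W₂) = n)
    {ι : Type*} [Finite ι] (E : ι → Set V) (hE : ∀ i, finrank ℝ (vectorSpan ℝ (E i)) < n) :
    ∃ p ∈ W₁, ∃ q ∈ W₂, ∀ i, ∀ x ∈ segment ℝ p q, x ∈ E i →
      finrank ℝ (vectorSpan ℝ (E i)) + 1 = n := by
  obtain ⟨p, hpW₁, hp⟩ := hW₁.exists_mem_forall_notMem_of_finite hne₁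
    (finite_range fun i => affineSpan ℝ (E i)) (by
      rintro _ ⟨i, rfl⟩
      exact not_subset_of_finrank_direction_lt (by rw [direction_affineSpan, hn₁]; exact hE i))
  obtain ⟨q, hqW₂, hq⟩ := hW₂.exists_mem_forall_notMem_of_finite hne₂
    (finite_range fun i : {i // finrank ℝ (vectorSpan ℝ (E i)) + 1 < n} =>
      affineSpan ℝ (insert p (E i))) (by
      rintro _ ⟨i, rfl⟩
      refine not_subset_of_finrank_direction_lt ?_
      rw [direction_affineSpan, hn₂]
      exact (finrank_vectorSpan_insert_le_set ℝ _ p).trans_lt i.2)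
  refine ⟨p, hpW₁, q, hqW₂, fun i x hx hxE => le_antisymm (hE i) (not_lt.1 fun hlt => ?_)⟩
  rw [segment_eq_image_lineMap] at hx
  obtain ⟨t, -, rfl⟩ := hx
  have ht : t ≠ 0 := by
    rintro rfl
    exact hp _ ⟨i, rfl⟩ (by simpa using subset_affineSpan ℝ _ hxE)
  refine hq _ ⟨⟨i, hlt⟩, rfl⟩ ?_
  simpa using (affineSpan ℝ (insert p (E i))).lineMap_mem_of_lineMap_mem ht
    (subset_affineSpan ℝ _ (mem_insert_of_mem p hxE))
    (by simpa using subset_affineSpan ℝ _ (mem_insert p (E i))) 1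

end GenericSegment

theorem SimpleGraph.reachable_of_isPreconnected {X V : Type*} [TopologicalSpace X] [Finite V]
    (G : SimpleGraph V) {K : V → Set X} (hK : ∀ v, IsClosed (K v)) {s : Set X}
    (hs : IsPreconnected s) (hsK : s ⊆ ⋃ v, K v)
    (hadj : ∀ u v, u ≠ v → (s ∩ K u ∩ K v).Nonempty → G.Adj u v) {u v : V}
    (hu : (s ∩ K u).Nonempty) (hv : (s ∩ K v).Nonempty) : G.Reachable u v := by
  by_contra huv
  obtain ⟨x, hxs, hxR, hxN⟩ := isPreconnected_closed_iff.1 hs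
    (⋃ w : {w // G.Reachable u w}, K w) (⋃ w : {w // ¬ G.Reachable u w}, K w)
    (isClosed_iUnion_of_finite fun w => hK w) (isClosed_iUnion_of_finite fun w => hK w)
    (fun x hx => by
      obtain ⟨w, hxw⟩ := mem_iUnion.1 (hsK hx)
      by_cases huw : G.Reachable u w
      exacts [Or.inl (mem_iUnion.2 ⟨⟨w, huw⟩, hxw⟩), Or.inr (mem_iUnion.2 ⟨⟨w, huw⟩, hxw⟩)])
    (hu.mono fun x hx => ⟨hx.1, mem_iUnion.2 ⟨⟨u, .rfl⟩, hx.2⟩⟩)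
    (hv.mono fun x hx => ⟨hx.1, mem_iUnion.2 ⟨⟨v, huv⟩, hx.2⟩⟩)
  obtain ⟨⟨w, hw⟩, hxw⟩ := mem_iUnion.1 hxR
  obtain ⟨⟨w', hw'⟩, hxw'⟩ := mem_iUnion.1 hxN
  have hne : w ≠ w' := by rintro rfl; exact hw' hw
  exact hw' (hw.trans (hadj w w' hne ⟨x, ⟨hxs, hxw⟩, hxw'⟩).reachable)

namespace Subdivision

variable {d : ℕ} {P : Set (Fin d → ℝ)} (S : Subdivision d P)

theorem convex_of_mem {C : Set (Fin d → ℝ)} (hC : C ∈ S.cells) : Convex ℝ C := by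
  obtain ⟨V, rfl⟩ := S.poly C hC
  exact convex_convexHull ℝ _

theorem isClosed_of_mem {C : Set (Fin d → ℝ)} (hC : C ∈ S.cells) : IsClosed C := by
  obtain ⟨V, rfl⟩ := S.poly C hC
  exact (V.finite_toSet.isCompact_convexHull (𝕜 := ℝ)).isClosed

theorem subset_of_mem {C : Set (Fin d → ℝ)} (hC : C ∈ S.cells) : C ⊆ P :=
  S.covers ▸ subset_sUnion_of_mem hC

instance finite_isMaxCell : Finite {C // S.IsMaxCell C} :=
  (S.cells.finite_toSet.subset fun _ hC => hC.1).to_subtype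

theorem exists_isMaxCell_mem {x : Fin d → ℝ} (hx : x ∈ P) : ∃ M, S.IsMaxCell M ∧ x ∈ M := by
  rw [← S.covers] at hx
  obtain ⟨C, hC, hxC⟩ := hx
  obtain ⟨M, hCM, hM, hMmax⟩ := S.cells.exists_le_maximal hC
  exact ⟨M, ⟨hM, fun D hD hMD => le_antisymm hMD (hMmax hD hMD)⟩, hCM hxC⟩

theorem eq_of_mem_intrinsicInterior {C D : Set (Fin d → ℝ)} (hC : S.IsMaxCell C)
    {x : Fin d → ℝ} (hx : x ∈ intrinsicInterior ℝ C) (hD : D ∈ S.cells) (hxD : x ∈ D) :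
    D = C := by
  have hface := (S.faceToFace C hC.1 D hD).isExtreme.eq_of_mem_intrinsicInterior hx
    ⟨intrinsicInterior_subset hx, hxD⟩
  exact (hC.2 D hD (hface ▸ inter_subset_right)).symm

theorem exists_mem_nhds_inter_subset {C : Set (Fin d → ℝ)} (hC : S.IsMaxCell C)
    {x : Fin d → ℝ} (hx : x ∈ intrinsicInterior ℝ C) : ∃ U ∈ 𝓝 x, P ∩ U ⊆ C := by
  classical
  refine ⟨(⋃ D ∈ S.cells.erase C, D)ᶜ, ?_, ?_⟩
  · refine (isClosed_biUnion_finset fun D hD => S.isClosed_of_mem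
      (Finset.mem_of_mem_erase hD)).isOpen_compl.mem_nhds ?_
    simp only [mem_compl_iff, mem_iUnion, not_exists]
    exact fun D hD hxD => Finset.ne_of_mem_erase hD
      (S.eq_of_mem_intrinsicInterior hC hx (Finset.mem_of_mem_erase hD) hxD)
  · rintro y ⟨hyP, hyU⟩
    rw [← S.covers] at hyP
    obtain ⟨D, hD, hyD⟩ := hyP
    by_contra hyC
    exact hyU (mem_biUnion (Finset.mem_erase.2 ⟨fun h => hyC (h ▸ hyD), hD⟩) hyD)

theorem finrank_vectorSpan_of_isMaxCell (hP : Convex ℝ P) {C : Set (Fin d → ℝ)}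
    (hC : S.IsMaxCell C) : finrank ℝ (vectorSpan ℝ C) = finrank ℝ (vectorSpan ℝ P) := by
  obtain ⟨x, hx⟩ := (S.cell_nonempty C hC.1).intrinsicInterior (S.convex_of_mem hC.1)
  obtain ⟨U, hU, hPU⟩ := S.exists_mem_nhds_inter_subset hC hx
  have hspan : affineSpan ℝ C = affineSpan ℝ P :=
    (affineSpan_mono ℝ (S.subset_of_mem hC.1)).antisymm <| affineSpan_le.2 <|
      hP.subset_affineSpan_of_inter_subset (S.subset_of_mem hC.1 (intrinsicInterior_subset hx))
        hU hPU
  rw [← direction_affineSpan, hspan, direction_affineSpan]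

theorem finrank_vectorSpan_inter_lt (hP : Convex ℝ P) {D D' : Set (Fin d → ℝ)}
    (hD : S.IsMaxCell D) (hD' : S.IsMaxCell D') (hne : D ≠ D') (hDD' : (D ∩ D').Nonempty) :
    finrank ℝ (vectorSpan ℝ (D ∩ D')) < finrank ℝ (vectorSpan ℝ P) := by
  rw [← S.finrank_vectorSpan_of_isMaxCell hP hD]
  refine (S.faceToFace D hD.1 D' hD'.1).finrank_vectorSpan_lt hDD' fun h => hne ?_
  exact hD.2 D' hD'.1 (h ▸ inter_subset_right)

theorem dualAdj_of_finrank_add_one_eq (hP : Convex ℝ P) {D D' : Set (Fin d → ℝ)}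
    (hD : S.IsMaxCell D) (hD' : S.IsMaxCell D') (hne : D ≠ D')
    (h : finrank ℝ (vectorSpan ℝ (D ∩ D')) + 1 = finrank ℝ (vectorSpan ℝ P)) :
    dualAdj S D D' :=
  ⟨hne, ⟨S.faceToFace D hD.1 D' hD'.1, by rwa [S.finrank_vectorSpan_of_isMaxCell hP hD]⟩,
    ⟨inter_comm D' D ▸ S.faceToFace D' hD'.1 D hD.1,
      by rwa [S.finrank_vectorSpan_of_isMaxCell hP hD']⟩⟩

theorem exists_segment_dualGraph_adj (hP : Convex ℝ P) {C C' : Set (Fin d → ℝ)}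
    (hC : S.IsMaxCell C) (hC' : S.IsMaxCell C') :
    ∃ p ∈ C, ∃ q ∈ C', ∀ D D' : {D // S.IsMaxCell D}, D ≠ D' →
      (segment ℝ p q ∩ D.1 ∩ D'.1).Nonempty → (dualGraph S).Adj D D' := by
  let ι := {e : {D // S.IsMaxCell D} × {D // S.IsMaxCell D} //
    e.1 ≠ e.2 ∧ (e.1.1 ∩ e.2.1).Nonempty}
  obtain ⟨p, hp, q, hq, hpq⟩ := exists_segment_finrank_add_one_eq (S.convex_of_mem hC.1)
    (S.convex_of_mem hC'.1) (S.cell_nonempty C hC.1) (S.cell_nonempty C' hC'.1)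
    (S.finrank_vectorSpan_of_isMaxCell hP hC) (S.finrank_vectorSpan_of_isMaxCell hP hC')
    (fun i : ι => i.1.1.1 ∩ i.1.2.1) fun i =>
      S.finrank_vectorSpan_inter_lt hP i.1.1.2 i.1.2.2 (Subtype.coe_ne_coe.2 i.2.1) i.2.2
  refine ⟨p, hp, q, hq, fun D D' hne ⟨x, ⟨hx, hxD⟩, hxD'⟩ => ?_⟩
  exact S.dualAdj_of_finrank_add_one_eq hP D.2 D'.2 (Subtype.coe_ne_coe.2 hne)
    (hpq ⟨(D, D'), hne, x, hxD, hxD'⟩ x hx ⟨hxD, hxD'⟩)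

end Subdivision

/-- The dual graph of a subdivision of a polytope is connected. -/
theorem dualGraph_connected {d : ℕ} {P : Set (Fin d → ℝ)} (hP : IsPolytope P)
    (hPne : P.Nonempty) (S : Subdivision d P) :
    (dualGraph S).Connected := by
  have hPconv : Convex ℝ P := by
    obtain ⟨V, rfl⟩ := hP
    exact convex_convexHull ℝ _
  obtain ⟨M, hM, -⟩ := S.exists_isMaxCell_mem hPne.some_mem
  have : Nonempty {C // S.IsMaxCell C} := ⟨⟨M, hM⟩⟩
  refine ⟨fun C C' => ?_⟩
  obtain ⟨p, hp, q, hq, hadj⟩ := S.exists_segment_dualGraph_adj hPconv C.2 C'.2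
  refine (dualGraph S).reachable_of_isPreconnected (K := fun D => D.1)
    (fun D => S.isClosed_of_mem D.2.1) (convex_segment p q).isPreconnected (fun x hx => ?_)
    hadj ⟨p, left_mem_segment ℝ p q, hp⟩ ⟨q, right_mem_segment ℝ p q, hq⟩
  obtain ⟨D, hD, hxD⟩ := S.exists_isMaxCell_mem
    (hPconv.segment_subset (S.subset_of_mem C.2.1 hp) (S.subset_of_mem C'.2.1 hq) hx)
  exact mem_iUnion.2 ⟨⟨D, hD⟩, hxD⟩
end

section
/- For n ≥ 4 and each i ∈ {2,…,n-1}, the function g_i(x) = λ(x) + 1 - x₁ - x_i is nonnegative on all vertices of Δ(2,n), and vanishes on exactly n vertices, namely: e₁+e_i, e₁+e_n, and the n-2 vertices e_i + e_j with j ∈ [n] \ {1,i}. -/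
/-- The 0/1-vector e_a + e_b for distinct a, b. -/
def pairVec (n : ℕ) (a b : Fin n) : Fin n → ℝ := fun i =>
  if i = a ∨ i = b then 1 else 0

/-- Vertices of Δ(2,n): vectors e_a + e_b for distinct a, b ∈ [n]. -/
def verts2 (n : ℕ) : Set (Fin n → ℝ) :=
  {x | ∃ a b : Fin n, a ≠ b ∧ x = pairVec n a b}

/-- The height function λ on Δ(2,n): 1 on the vertices e₁ + e_j with 2 ≤ j ≤ n-1
(those with first coordinate 1 and last coordinate 0), and 0 otherwise. -/
noncomputable def lam2 (n : ℕ) (hn : 4 ≤ n) : (Fin n → ℝ) → ℝ :=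
  Set.indicator
    {x | x ∈ verts2 n ∧ x ⟨0, by omega⟩ = 1 ∧ x ⟨n - 1, by omega⟩ = 0} 1

/-- g_i(x) = λ(x) + 1 - x₁ - x_i. -/
noncomputable def gFun (n : ℕ) (hn : 4 ≤ n) (i : Fin n) (x : Fin n → ℝ) : ℝ :=
  lam2 n hn x + 1 - x ⟨0, by omega⟩ - x i

lemma pairVec_comm (n : ℕ) (a b : Fin n) : pairVec n a b = pairVec n b a := by
  funext c; simp only [pairVec, or_comm]

lemma pairVec_eq_iff {n : ℕ} {a b c d : Fin n} (hab : a ≠ b) (hcd : c ≠ d) :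
    pairVec n a b = pairVec n c d ↔ (a = c ∧ b = d) ∨ (a = d ∧ b = c) := by
  constructor
  · intro h
    have ha : a = c ∨ a = d := by
      by_contra hc
      have := congrFun h a
      simp only [pairVec, if_pos (Or.inl rfl), if_neg hc] at this
      norm_num at this
    have hb : b = c ∨ b = d := by
      by_contra hc
      have := congrFun h b
      simp only [pairVec, if_pos (Or.inr rfl), if_neg hc] at this
      norm_num at this
    rcases ha with rfl | rfl
    · rcases hb with rfl | rfl
      · exact absurd rfl hab
      · exact Or.inl ⟨rfl, rfl⟩
    · rcases hb with rfl | rfl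
      · exact Or.inr ⟨rfl, rfl⟩
      · exact absurd rfl hab
  · rintro (⟨rfl, rfl⟩ | ⟨rfl, rfl⟩)
    · rfl
    · exact pairVec_comm n a b

lemma lam2_eq (n : ℕ) (hn : 4 ≤ n) (x : Fin n → ℝ) (hx : x ∈ verts2 n) :
    lam2 n hn x =
      if x ⟨0, by omega⟩ = 1 ∧ x ⟨n - 1, by omega⟩ = 0 then 1 else 0 := by
  unfold lam2
  by_cases h : x ⟨0, by omega⟩ = 1 ∧ x ⟨n - 1, by omega⟩ = 0
  · have hm : x ∈ {x | x ∈ verts2 n ∧ x ⟨0, by omega⟩ = 1 ∧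
        x ⟨n - 1, by omega⟩ = 0} := ⟨hx, h⟩
    rw [Set.indicator_of_mem hm, if_pos h]; rfl
  · have hm : x ∉ {x | x ∈ verts2 n ∧ x ⟨0, by omega⟩ = 1 ∧
        x ⟨n - 1, by omega⟩ = 0} := fun hc => h hc.2
    rw [Set.indicator_of_notMem hm, if_neg h]

/-- For n ≥ 4 and each i ∈ {2,…,n-1}, the function g_i is nonnegative on all
vertices of Δ(2,n) and vanishes exactly on the n vertices e₁+e_i, e₁+e_n, and
e_i+e_j for j ∈ [n] ∖ {1,i}. -/
theorem gFun_nonneg_and_zero_iff (n : ℕ) (hn : 4 ≤ n) (i : Fin n)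
    (hi1 : 1 ≤ i.val) (hi2 : i.val < n - 1) :
    ∀ x ∈ verts2 n,
      0 ≤ gFun n hn i x ∧
      (gFun n hn i x = 0 ↔
        x = pairVec n ⟨0, by omega⟩ i ∨
        x = pairVec n ⟨0, by omega⟩ ⟨n - 1, by omega⟩ ∨
        ∃ j : Fin n, j ≠ ⟨0, by omega⟩ ∧ j ≠ i ∧ x = pairVec n i j) := by
  rintro x ⟨a, b, hab, rfl⟩
  have hmem : pairVec n a b ∈ verts2 n := ⟨a, b, hab, rfl⟩
  obtain ⟨e0, he0⟩ : ∃ v : Fin n, v = ⟨0, by omega⟩ := ⟨_, rfl⟩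
  obtain ⟨en, hen⟩ : ∃ v : Fin n, v = ⟨n - 1, by omega⟩ := ⟨_, rfl⟩
  have hie0 : i ≠ e0 := by
    intro h; rw [he0, Fin.ext_iff] at h; simp at h; omega
  have hien : i ≠ en := by
    intro h; rw [hen, Fin.ext_iff] at h; simp at h; omega
  have h0n : e0 ≠ en := by
    intro h; rw [he0, hen, Fin.ext_iff] at h; simp at h; omega
  have hlam := lam2_eq n hn (pairVec n a b) hmem
  unfold gFun
  rw [← he0, ← hen] at hlam ⊢
  have hx0 : pairVec n a b e0 = if e0 = a ∨ e0 = b then 1 else 0 := rfl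
  have hxn : pairVec n a b en = if en = a ∨ en = b then 1 else 0 := rfl
  have hxi : pairVec n a b i = if i = a ∨ i = b then 1 else 0 := rfl
  by_cases h0 : e0 = a ∨ e0 = b
  · by_cases hN : en = a ∨ en = b
    · -- {a,b} = {e0, en}
      have hi' : ¬ (i = a ∨ i = b) := by
        rintro (rfl | rfl)
        · rcases h0 with h | h
          · exact hie0 h.symm
          · rcases hN with h' | h'
            · exact hien h'.symm
            · exact h0n (h.trans h'.symm)
        · rcases h0 with h | h
          · rcases hN with h' | h'
            · exact h0n (h.trans h'.symm)
            · exact hien h'.symm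
          · exact hie0 h.symm
      rw [hlam, if_neg (by rw [hxn, if_pos hN]; norm_num), hx0, if_pos h0,
        hxi, if_neg hi']
      refine ⟨by norm_num, ?_⟩
      constructor
      · intro _
        right; left
        rw [pairVec_eq_iff hab h0n]
        rcases h0 with rfl | rfl <;> rcases hN with h | h <;> tauto
      · intro _; norm_num
    · -- lam = 1, x e0 = 1, g = 1 - x i
      rw [hlam, if_pos ⟨by rw [hx0, if_pos h0], by rw [hxn, if_neg hN]⟩,
        hx0, if_pos h0, hxi]
      by_cases hi : i = a ∨ i = b
      · rw [if_pos hi]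
        refine ⟨by norm_num, ?_⟩
        constructor
        · intro _
          left
          rw [pairVec_eq_iff hab (Ne.symm hie0)]
          rcases h0 with rfl | rfl <;> rcases hi with h | h <;> tauto
        · intro _; ring
      · rw [if_neg hi]
        refine ⟨by norm_num, ?_⟩
        constructor
        · intro h; norm_num at h
        · rintro (h | h | ⟨j, hj0, hji, h⟩)
          · rw [pairVec_eq_iff hab (Ne.symm hie0)] at h
            tauto
          · rw [pairVec_eq_iff hab h0n] at h
            tauto
          · rw [pairVec_eq_iff hab (fun hij => hji hij.symm)] at h
            tauto
  · -- x e0 = 0, lam = 0, g = 1 - x i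
    rw [hlam, if_neg (by rw [hx0, if_neg h0]; norm_num), hx0, if_neg h0, hxi]
    by_cases hi : i = a ∨ i = b
    · rw [if_pos hi]
      refine ⟨by norm_num, ?_⟩
      constructor
      · intro _
        right; right
        rcases hi with h | h
        · exact ⟨b, fun hb => h0 (Or.inr hb.symm),
            fun hb => hab (h.symm.trans hb.symm), by rw [h]⟩
        · exact ⟨a, fun ha => h0 (Or.inl ha.symm),
            fun ha => hab (ha.trans h), by rw [h]; exact pairVec_comm n a b⟩
      · intro _; ring
    · rw [if_neg hi]
      refine ⟨by norm_num, ?_⟩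
      constructor
      · intro h; norm_num at h
      · rintro (h | h | ⟨j, hj0, hji, h⟩)
        · rw [pairVec_eq_iff hab (Ne.symm hie0)] at h
          tauto
        · rw [pairVec_eq_iff hab h0n] at h
          tauto
        · rw [pairVec_eq_iff hab (fun hij => hji hij.symm)] at h
          tauto
end

section
/- Let c = e₁ + e_{n-k+2} + ⋯ + e_n ∈ ℝⁿ (a leading one, n-k zeros, k-1 trailing ones), let κ be the height function on the vertices of Δ(k,n) assigning 1 to every vertex with first coordinate 1 except c, and 0 to all other vertices (including c). For i ∈ {2,…,n-k+1}, the affine function f_i(x) = 1 - x₁ - x_i + x_{n+1} on ℝ^{n+1} is nonnegative on all lifted vertices (v, κ(v)) of Δ(k,n), and vanishes exactly on the lifted point (c,0) together with the lifted vertices v with v_i = 1. -/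
/-- The vertex set of the hypersimplex Δ(k,n): 0/1-vectors with exactly k ones. -/
def hypersimplexVerts (k n : ℕ) : Set (Fin n → ℝ) :=
  {x | (∀ i, x i = 0 ∨ x i = 1) ∧ ∑ i, x i = k}

/-- The center c = e₁ + e_{n-k+2} + ⋯ + e_n: a leading one, n-k zeros, k-1 trailing ones. -/
def center (k n : ℕ) : Fin n → ℝ := fun l =>
  if l.val = 0 ∨ n - k + 1 ≤ l.val then 1 else 0

open Classical in
/-- The height function κ: 1 on every vertex with first coordinate 1 except c, else 0. -/
noncomputable def kap (k n : ℕ) (hn : 0 < n) (v : Fin n → ℝ) : ℝ :=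
  if v ⟨0, hn⟩ = 1 ∧ v ≠ center k n then 1 else 0

/-- The lift of a vertex v of Δ(k,n) to (v, κ(v)) ∈ ℝ^{n+1}. -/
noncomputable def liftVert (k n : ℕ) (hn : 0 < n) (v : Fin n → ℝ) : Fin (n + 1) → ℝ :=
  Fin.snoc v (kap k n hn v)

/-- The affine function f_i(x) = 1 - x₁ - x_i + x_{n+1} on ℝ^{n+1}. -/
def fAff (n : ℕ) (i : Fin n) (x : Fin (n + 1) → ℝ) : ℝ :=
  1 - x 0 - x i.castSucc + x (Fin.last n)

/-- For 2 ≤ k ≤ n-2 and i ∈ {2,…,n-k+1}, the affine function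
f_i(x) = 1 - x₁ - x_i + x_{n+1} is nonnegative on all lifted vertices (v, κ(v)) of
Δ(k,n), and vanishes exactly on the lifted center (c,0) together with the lifted
vertices v with v_i = 1. -/
theorem fAff_nonneg_and_zero_iff (n k : ℕ) (hk : 2 ≤ k) (hkn : k ≤ n - 2)
    (i : Fin n) (hi1 : 1 ≤ i.val) (hi2 : i.val ≤ n - k) :
    ∀ v ∈ hypersimplexVerts k n,
      0 ≤ fAff n i (liftVert k n (by omega) v) ∧
      (fAff n i (liftVert k n (by omega) v) = 0 ↔ v = center k n ∨ v i = 1) := by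
  intro v hv
  obtain ⟨h01, hsum⟩ := hv
  have hn : 0 < n := by omega
  have h0 : (0 : Fin (n+1)) = Fin.castSucc ⟨0, hn⟩ := by ext; simp
  have hci : center k n i = 0 := by
    simp only [center, if_neg (show ¬(i.val = 0 ∨ n - k + 1 ≤ i.val) by omega)]
  have hc0 : center k n ⟨0, hn⟩ = 1 := by
    simp [center]
  have key : fAff n i (liftVert k n hn v) = 1 - v ⟨0, hn⟩ - v i + kap k n hn v := by
    rw [fAff, h0, liftVert, Fin.snoc_castSucc, Fin.snoc_castSucc, Fin.snoc_last]
  rw [key]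
  by_cases hc : v ⟨0, hn⟩ = 1 ∧ v ≠ center k n
  · rw [kap, if_pos hc, hc.1]
    refine ⟨?_, ?_, ?_⟩
    · rcases h01 i with h | h <;> rw [h] <;> norm_num
    · intro hx
      right
      rcases h01 i with h | h
      · exfalso; rw [h] at hx; norm_num at hx
      · exact h
    · rintro (hx | hx)
      · exact absurd hx hc.2
      · rw [hx]; ring
  · rw [kap, if_neg hc]
    push_neg at hc
    by_cases hce : v = center k n
    · rw [hce, hc0, hci]
      norm_num
    · have hv0 : v ⟨0, hn⟩ = 0 := by
        rcases h01 ⟨0, hn⟩ with h | h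
        · exact h
        · exact absurd (hc h) (by simp [hce])
      rw [hv0]
      refine ⟨?_, ?_, ?_⟩
      · rcases h01 i with h | h <;> rw [h] <;> norm_num
      · intro hx
        right
        rcases h01 i with h | h
        · exfalso; rw [h] at hx; norm_num at hx
        · exact h
      · rintro (hx | hx)
        · exact absurd hx hce
        · rw [hx]; ring
end
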